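/- arXiv:2408.09963 — 3 statements merged into one kernel-verified Lean document; each statement's English description precedes it below -/
import Mathlib

section
/- For any natural numbers d, e with d ≥ e, the falling-type polynomials x_q^d := x(x-(q-1))(x-(q^2-1))···(x-(q^{d-1}-1)) satisfy the product formula x_q^d · x_q^e = Σ_{s=0}^{e} C_{d,e,s,q} · x_q^{d+e-s}, where C_{d,e,s,q} = [d choose s]_q · [e choose s]_q · (q^s-1)(q^s-q)···(q^s-q^{s-1}). -/
/-
The coefficients are easiest to handle after multiplying by `φ_s = ∏_{j<s} (q^s - q^j)`:
since `[n choose k]_q φ_k = ∏_{i<k} (q^n - q^i)` (injective linear maps `F_q^k → F_q^n` are a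
`k`-dimensional subspace together with a basis of it), `C_{d,e,s} φ_s` is the product of the two
falling products `∏_{i<s} (q^d - q^i)` and `∏_{i<s} (q^e - q^i)`. In this form the coefficients
satisfy a Pascal-type recursion in `e` by a ring identity, and `φ_s ≠ 0` lets us divide it out.
That recursion is exactly what multiplying the expansion of `x_q^d x_q^e` by
`x - (q^e - 1)` produces, since `x_q^m (x - (q^e - 1)) = x_q^{m+1} + (q^m - q^e) x_q^m`.
-/

open Polynomial

/-- The Gaussian binomial coefficient `[n choose k]_q` as a polynomial in `q`. -/
noncomputable def gaussBinom : ℕ → ℕ → Polynomial ℤ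
  | _, 0 => 1
  | 0, _ + 1 => 0
  | n + 1, k + 1 => gaussBinom n k + X ^ (k + 1) * gaussBinom n (k + 1)

/-- `x_q^d := ∏_{j=0}^{d-1} (x - (q^j - 1))`, as an element of `ℤ[q][x]`. -/
noncomputable def xq (d : ℕ) : Polynomial (Polynomial ℤ) :=
  ∏ j ∈ Finset.range d, (X - C ((X : Polynomial ℤ) ^ j - 1))

/-- `C_{d,e,s,q} = [d choose s]_q [e choose s]_q (q^s-1)(q^s-q)⋯(q^s-q^{s-1})`. -/
noncomputable def Cpoly (d e s : ℕ) : Polynomial ℤ :=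
  gaussBinom d s * gaussBinom e s *
    ∏ j ∈ Finset.range s, ((X : Polynomial ℤ) ^ s - X ^ j)

open Finset

noncomputable def qFalling (n k : ℕ) : ℤ[X] :=
  ∏ i ∈ range k, (X ^ n - X ^ i)

lemma qFalling_succ_right (n k : ℕ) : qFalling n (k + 1) = qFalling n k * (X ^ n - X ^ k) :=
  prod_range_succ _ _

lemma qFalling_succ_succ (n k : ℕ) :
    qFalling (n + 1) (k + 1) = (X ^ (n + 1) - 1) * X ^ k * qFalling n k := by
  have h : ∀ i ∈ range k, (X ^ (n + 1) - X ^ (i + 1) : ℤ[X]) = X * (X ^ n - X ^ i) :=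
    fun i _ ↦ by ring
  rw [qFalling, prod_range_succ', prod_congr rfl h, prod_mul_distrib, prod_const, card_range,
    qFalling]
  ring

lemma qFalling_self_ne_zero (k : ℕ) : qFalling k k ≠ 0 :=
  prod_ne_zero_iff.2 fun i hi ↦ sub_ne_zero.2 fun h ↦
    (mem_range.1 hi).ne' (by simpa using congrArg natDegree h)

lemma qFalling_eq_zero_of_lt {n k : ℕ} (h : n < k) : qFalling n k = 0 :=
  prod_eq_zero (mem_range.2 h) (sub_self _)

lemma gaussBinom_zero_right (n : ℕ) : gaussBinom n 0 = 1 := by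
  cases n <;> rfl

lemma gaussBinom_mul_qFalling_self (n k : ℕ) :
    gaussBinom n k * qFalling k k = qFalling n k := by
  induction n generalizing k with
  | zero =>
    cases k with
    | zero => simp [gaussBinom, qFalling]
    | succ k => simp [gaussBinom, qFalling_eq_zero_of_lt (Nat.succ_pos k)]
  | succ n ih =>
    cases k with
    | zero => simp [gaussBinom, qFalling]
    | succ k =>
      have hk := ih k
      have hk1 := ih (k + 1)
      rw [qFalling_succ_succ, qFalling_succ_right] at hk1
      rw [gaussBinom, qFalling_succ_succ, qFalling_succ_succ]
      linear_combination (X ^ (k + 1) - 1) * X ^ k * hk + X ^ (k + 1) * hk1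

lemma gaussBinom_eq_zero_of_lt {n k : ℕ} (h : n < k) : gaussBinom n k = 0 := by
  have := gaussBinom_mul_qFalling_self n k
  rwa [qFalling_eq_zero_of_lt h, mul_eq_zero, or_iff_left (qFalling_self_ne_zero k)] at this

lemma Cpoly_zero_right (d e : ℕ) : Cpoly d e 0 = 1 := by
  simp [Cpoly, gaussBinom_zero_right]

lemma Cpoly_succ_self (d e : ℕ) : Cpoly d e (e + 1) = 0 := by
  simp [Cpoly, gaussBinom_eq_zero_of_lt (Nat.lt_succ_self e)]

lemma Cpoly_mul_qFalling_self (d e s : ℕ) :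
    Cpoly d e s * qFalling s s = qFalling d s * qFalling e s := by
  rw [← gaussBinom_mul_qFalling_self d, ← gaussBinom_mul_qFalling_self e, Cpoly, qFalling]
  ring

lemma Cpoly_succ_succ (d : ℕ) {e s : ℕ} (hs : s ≤ e) :
    Cpoly d (e + 1) (s + 1) = Cpoly d e (s + 1) + (X ^ (d + e - s) - X ^ e) * Cpoly d e s := by
  obtain ⟨t, rfl⟩ := Nat.exists_eq_add_of_le hs
  refine mul_right_cancel₀ (qFalling_self_ne_zero (s + 1)) ?_
  have hC := Cpoly_mul_qFalling_self d (s + t) s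
  rw [add_mul, mul_assoc, Cpoly_mul_qFalling_self, Cpoly_mul_qFalling_self,
    qFalling_succ_succ s, qFalling_succ_succ (s + t), qFalling_succ_right, qFalling_succ_right,
    show d + (s + t) - s = d + t by omega]
  linear_combination (X ^ (s + t) - X ^ (d + t)) * (X ^ (s + 1) - 1) * X ^ s * hC

lemma xq_succ (m : ℕ) : xq (m + 1) = xq m * (X - C (X ^ m - 1)) :=
  prod_range_succ _ _

lemma xq_mul_X_sub_C (m e : ℕ) :
    xq m * (X - C (X ^ e - 1)) = xq (m + 1) + C (X ^ m - X ^ e) * xq m := by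
  rw [xq_succ]
  simp only [map_sub, map_one]
  ring

lemma sum_Cpoly_mul_xq_mul_X_sub_C (d e : ℕ) :
    (∑ s ∈ range (e + 1), C (Cpoly d e s) * xq (d + e - s)) * (X - C (X ^ e - 1)) =
      ∑ s ∈ range (e + 2), C (Cpoly d (e + 1) s) * xq (d + (e + 1) - s) := by
  have hshift : ∑ s ∈ range (e + 1), C (Cpoly d e s) * xq (d + e - s + 1) =
      ∑ s ∈ range (e + 1), C (Cpoly d e (s + 1)) * xq (d + e - s) + xq (d + e + 1) := by
    rw [sum_range_succ', sum_range_succ _ e, Cpoly_succ_self, Cpoly_zero_right, C_0, zero_mul,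
      add_zero, C_1, one_mul, Nat.sub_zero]
    refine congrArg (· + _) (sum_congr rfl fun s hs ↦ ?_)
    rw [show d + e - (s + 1) + 1 = d + e - s by have := mem_range.1 hs; omega]
  calc _ = ∑ s ∈ range (e + 1), (C (Cpoly d e s) * xq (d + e - s + 1) +
          C ((X ^ (d + e - s) - X ^ e) * Cpoly d e s) * xq (d + e - s)) := by
        rw [sum_mul]
        refine sum_congr rfl fun s _ ↦ ?_
        rw [mul_assoc, xq_mul_X_sub_C, C_mul]
        ring
    _ = _ := by
        rw [sum_add_distrib, hshift, sum_range_succ' _ (e + 1), Cpoly_zero_right, C_1, one_mul,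
          add_right_comm, ← sum_add_distrib]
        refine congrArg (· + _) (sum_congr rfl fun s hs ↦ ?_)
        rw [Cpoly_succ_succ d (Nat.lt_succ_iff.1 (mem_range.1 hs)), C_add, add_mul,
          show d + (e + 1) - (s + 1) = d + e - s by omega]

theorem xq_mul_xq_general (d e : ℕ) :
    xq d * xq e = ∑ s ∈ Finset.range (e + 1), C (Cpoly d e s) * xq (d + e - s) := by
  induction e with
  | zero => simp [xq, Cpoly_zero_right]
  | succ e ih => rw [xq_succ, ← mul_assoc, ih, sum_Cpoly_mul_xq_mul_X_sub_C]

theorem xq_mul_xq (d e : ℕ) (h : e ≤ d) :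
    xq d * xq e = ∑ s ∈ Finset.range (e + 1), C (Cpoly d e s) * xq (d + e - s) :=
  xq_mul_xq_general d e
end

section
/- Let G = ([n], E) be a graph, q a prime power, and U a d-dimensional totally-isotropic subspace of the graphical matrix space B_G ≤ Λ(n,q). If the Plücker coordinate of U at a size-d set R ⊆ [n] is nonzero (i.e., the d×d submatrix of a basis matrix of U with rows indexed by R is invertible), then R is an independent set of G. -/
open Matrix

def elemAlt {F : Type} [Field F] {n : ℕ} (i j : Fin n) : Matrix (Fin n) (Fin n) F :=
  fun a b => if a = i ∧ b = j then 1 else if a = j ∧ b = i then -1 else 0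

noncomputable def graphSpace {n : ℕ} (F : Type) [Field F] (G : SimpleGraph (Fin n)) :
    Submodule F (Matrix (Fin n) (Fin n) F) :=
  Submodule.span F {M | ∃ i j, G.Adj i j ∧ M = elemAlt i j}

def IsTotallyIsotropic {F : Type} [Field F] {n : ℕ}
    (𝓑 : Submodule F (Matrix (Fin n) (Fin n) F)) (U : Submodule F (Fin n → F)) : Prop :=
  ∀ u ∈ U, ∀ v ∈ U, ∀ B ∈ 𝓑, u ⬝ᵥ B *ᵥ v = 0

/-! A vector of `U` restricted to `R` can be any vector of `F^R` once the minor at `R` is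
invertible. Take `u, v ∈ U` restricting to the unit vectors at the ends `a, b` of an edge inside
`R`: isotropy for `A_{a,b}` says `u_a v_b - u_b v_a = 0`, yet this is `1 - 0`. -/

section

variable {F : Type} [Field F] {n : ℕ}

lemma elemAlt_eq_single_sub_single {i j : Fin n} (hij : i ≠ j) :
    (elemAlt i j : Matrix (Fin n) (Fin n) F) = single i j 1 - single j i 1 := by
  ext a b
  by_cases ha : a = i <;> by_cases hb : b = j <;>
    simp_all [elemAlt, single_apply, eq_comm, apply_ite]

lemma dotProduct_elemAlt_mulVec (u v : Fin n → F) {i j : Fin n} (hij : i ≠ j) :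
    u ⬝ᵥ (elemAlt i j : Matrix (Fin n) (Fin n) F) *ᵥ v = u i * v j - u j * v i := by
  simp only [elemAlt_eq_single_sub_single hij, sub_mulVec, single_mulVec_eq, dotProduct_sub,
    dotProduct_smul, dotProduct_single, smul_eq_mul, mul_one]
  ring

lemma IsTotallyIsotropic.mul_eq_mul_of_adj {G : SimpleGraph (Fin n)}
    {U : Submodule F (Fin n → F)} (hU : IsTotallyIsotropic (graphSpace F G) U)
    {u v : Fin n → F} (hu : u ∈ U) (hv : v ∈ U) {i j : Fin n} (hij : G.Adj i j) :
    u i * v j = u j * v i := by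
  have hA : (elemAlt i j : Matrix (Fin n) (Fin n) F) ∈ graphSpace F G :=
    Submodule.subset_span ⟨i, j, hij, rfl⟩
  have := hU u hu v hv _ hA
  rwa [dotProduct_elemAlt_mulVec u v hij.ne, sub_eq_zero] at this

end

lemma Matrix.mulVec_mem_span_range_transpose {R m k : Type} [CommRing R] [Fintype k]
    (T : Matrix m k R) (c : k → R) :
    T *ᵥ c ∈ Submodule.span R (Set.range Tᵀ) :=
  T.range_mulVecLin ▸ LinearMap.mem_range_self T.mulVecLin c

lemma Matrix.exists_mem_span_comp_eq_of_det_submatrix_ne_zero {F m k : Type} [Field F]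
    [Fintype k] [DecidableEq k] (T : Matrix m k F) {f : k → m} (hdet : (T.submatrix f id).det ≠ 0)
    (w : k → F) : ∃ u ∈ Submodule.span F (Set.range Tᵀ), u ∘ f = w := by
  set S := T.submatrix f id
  refine ⟨T *ᵥ (S⁻¹ *ᵥ w), T.mulVec_mem_span_range_transpose _, ?_⟩
  have hrestrict : ∀ c, (T *ᵥ c) ∘ f = S *ᵥ c := fun _ => rfl
  rw [hrestrict, mulVec_mulVec, mul_nonsing_inv _ (isUnit_iff_ne_zero.mpr hdet), one_mulVec]

theorem plucker_support_indep_general {F : Type} [Field F] {n d : ℕ}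
    (G : SimpleGraph (Fin n)) (U : Submodule F (Fin n → F))
    (htot : IsTotallyIsotropic (graphSpace F G) U)
    (T : Matrix (Fin n) (Fin d) F)
    (hspan : Submodule.span F (Set.range Tᵀ) = U)
    (f : Fin d → Fin n)
    (hdet : (T.submatrix f id).det ≠ 0) :
    ∀ u ∈ Set.range f, ∀ v ∈ Set.range f, ¬G.Adj u v := by
  rintro _ ⟨a, rfl⟩ _ ⟨b, rfl⟩ hadj
  have hab : a ≠ b := fun h => hadj.ne (congrArg f h)
  obtain ⟨u, hu, hua⟩ := T.exists_mem_span_comp_eq_of_det_submatrix_ne_zero hdet (Pi.single a 1)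
  obtain ⟨v, hv, hvb⟩ := T.exists_mem_span_comp_eq_of_det_submatrix_ne_zero hdet (Pi.single b 1)
  have := htot.mul_eq_mul_of_adj (hspan ▸ hu) (hspan ▸ hv) hadj
  have hu' : ∀ i, u (f i) = (Pi.single a 1 : Fin d → F) i := congrFun hua
  have hv' : ∀ i, v (f i) = (Pi.single b 1 : Fin d → F) i := congrFun hvb
  simp [hu', hv', hab, hab.symm] at this

/-- If a totally-isotropic subspace `U` of the graphical matrix space of `G` has
nonzero Plücker coordinate at a size-`d` set `R` (given as the range of an injective
`f : Fin d → Fin n`), then `R` is an independent set of `G`. -/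
theorem plucker_support_indep {F : Type} [Field F] [Fintype F] {n d : ℕ}
    (G : SimpleGraph (Fin n)) (U : Submodule F (Fin n → F))
    (htot : IsTotallyIsotropic (graphSpace F G) U)
    (T : Matrix (Fin n) (Fin d) F)
    (hind : LinearIndependent F Tᵀ)
    (hspan : Submodule.span F (Set.range Tᵀ) = U)
    (f : Fin d → Fin n) (hf : Function.Injective f)
    (hdet : (T.submatrix f id).det ≠ 0) :
    ∀ u ∈ Set.range f, ∀ v ∈ Set.range f, ¬G.Adj u v :=
  plucker_support_indep_general G U htot T hspan f hdet
end

section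
/- Let U ≤ F_q^{n₁} have dimension d and V ≤ F_q^{n₂} have dimension e, with d ≥ e. For 0 ≤ s ≤ e, the number of subspaces W ≤ F_q^{n₁+n₂} = F_q^{n₁} ⊕ F_q^{n₂} of dimension d+e-s with π₁(W) = U and π₂(W) = V equals [d choose s]_q · [e choose s]_q · (q^s - 1)(q^s - q)···(q^s - q^{s-1}), where π₁, π₂ are the coordinate projections. -/
/-
By Goursat's lemma, a subspace `W ≤ M × N` with `π₁ W = U` and `π₂ W = V` is the preimage in
`U × V` of the graph of an isomorphism `U / U₀ ≃ V / V₀`, where `U₀ = W ∩ (U × 0)` and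
`V₀ = W ∩ (0 × V)`, and these data are recovered from `W`. Since `dim W = dim U + dim V₀`, the
condition `dim W = d + e - s` says that `U₀` and `V₀` have codimension `s`. Hence the count is
(number of codimension-`s` subspaces of `U`) · (same for `V`) · `|GL_s(𝔽_q)|`. Duality turns
codimension-`s` subspaces into `s`-dimensional ones, and counting linearly independent `s`-tuples
shows that an `n`-dimensional space has `[n choose s]_q` of those, because
`[n choose s]_q · (q^s - 1)⋯(q^s - q^{s-1}) = (q^n - 1)⋯(q^n - q^{s-1})`.
-/

open Polynomial Matrix

open Finset Module Submodule

theorem prod_range_succ_pow_sub_pow {R : Type*} [CommRing R] (x : R) (n k : ℕ) :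
    ∏ j ∈ range (k + 1), (x ^ (n + 1) - x ^ j) =
      (x ^ (n + 1) - 1) * (x ^ k * ∏ j ∈ range k, (x ^ n - x ^ j)) := by
  simp only [prod_range_succ', pow_succ', ← mul_sub, prod_mul_distrib, prod_const, card_range]
  ring

theorem gaussBinom_mul_prod (n k : ℕ) :
    gaussBinom n k * ∏ j ∈ range k, (X ^ k - X ^ j) = ∏ j ∈ range k, ((X : ℤ[X]) ^ n - X ^ j) := by
  induction n generalizing k with
  | zero =>
    cases k with
    | zero => simp [gaussBinom]
    | succ k => simp [gaussBinom, prod_range_succ']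
  | succ n ih =>
    cases k with
    | zero => simp [gaussBinom]
    | succ k =>
      have h := ih (k + 1)
      rw [prod_range_succ_pow_sub_pow, prod_range_succ] at h
      rw [gaussBinom, prod_range_succ_pow_sub_pow, prod_range_succ_pow_sub_pow]
      linear_combination ((X : ℤ[X]) ^ (k + 1) - 1) * X ^ k * ih k + X ^ (k + 1) * h

theorem gaussBinom_eval_mul_prod (q : ℤ) (n k : ℕ) :
    (gaussBinom n k).eval q * ∏ j ∈ range k, (q ^ k - q ^ j) = ∏ j ∈ range k, (q ^ n - q ^ j) := by
  simpa [eval_prod] using congrArg (eval q) (gaussBinom_mul_prod n k)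

theorem natCast_prod_pow_sub_pow {q n k : ℕ} (hq : 0 < q) (hk : k ≤ n) :
    ((∏ j ∈ range k, (q ^ n - q ^ j) : ℕ) : ℤ) = ∏ j ∈ range k, ((q : ℤ) ^ n - (q : ℤ) ^ j) := by
  push_cast [Nat.cast_prod]
  refine prod_congr rfl fun j hj => ?_
  rw [Nat.cast_sub (Nat.pow_le_pow_right hq (by grind)), Nat.cast_pow, Nat.cast_pow]

theorem prod_range_pow_sub_pow_ne_zero {q : ℤ} (hq : 2 ≤ q) (k : ℕ) :
    ∏ j ∈ range k, (q ^ k - q ^ j) ≠ 0 :=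
  prod_ne_zero_iff.mpr fun j hj =>
    sub_ne_zero.mpr <| (pow_right_injective₀ (by omega) (by omega)).ne (by grind)

namespace Submodule

variable {R M N : Type*} [Ring R] [AddCommGroup M] [Module R M] [AddCommGroup N] [Module R N]
  {A : Submodule R M} {B : Submodule R N} {A' : Submodule R A} {B' : Submodule R B}

def goursatSubmodule (e : (A ⧸ A') ≃ₗ[R] B ⧸ B') : Submodule R (M × N) :=
  (e.graph.comap (A'.mkQ.prodMap B'.mkQ)).map (A.subtype.prodMap B.subtype)

theorem mem_goursatSubmodule {e : (A ⧸ A') ≃ₗ[R] B ⧸ B'} {x : M × N} :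
    x ∈ goursatSubmodule e ↔
      ∃ a : A, ∃ b : B, e (Quotient.mk a) = Quotient.mk b ∧ ((a : M), (b : N)) = x := by
  simp [goursatSubmodule, LinearMap.mem_graph_iff, @eq_comm _ (Quotient.mk _)]

theorem mk_mem_goursatSubmodule {e : (A ⧸ A') ≃ₗ[R] B ⧸ B'} {a : A} {b : B} :
    ((a : M), (b : N)) ∈ goursatSubmodule e ↔ e (Quotient.mk a) = Quotient.mk b := by
  rw [mem_goursatSubmodule]
  constructor
  · rintro ⟨a', b', h, hab⟩
    obtain ⟨h₁, h₂⟩ := Prod.mk.inj hab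
    rwa [← Subtype.ext h₁, ← Subtype.ext h₂]
  · exact fun h => ⟨a, b, h, rfl⟩

theorem map_fst_goursatSubmodule (e : (A ⧸ A') ≃ₗ[R] B ⧸ B') :
    (goursatSubmodule e).map (LinearMap.fst R M N) = A := by
  ext x
  simp only [mem_map, mem_goursatSubmodule, LinearMap.fst_apply]
  constructor
  · rintro ⟨_, ⟨a, b, -, rfl⟩, rfl⟩
    exact a.2
  · intro hx
    obtain ⟨b, hb⟩ := B'.mkQ_surjective (e (Quotient.mk ⟨x, hx⟩))
    exact ⟨_, ⟨⟨x, hx⟩, b, hb.symm, rfl⟩, rfl⟩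

theorem map_snd_goursatSubmodule (e : (A ⧸ A') ≃ₗ[R] B ⧸ B') :
    (goursatSubmodule e).map (LinearMap.snd R M N) = B := by
  ext y
  simp only [mem_map, mem_goursatSubmodule, LinearMap.snd_apply]
  constructor
  · rintro ⟨_, ⟨a, b, -, rfl⟩, rfl⟩
    exact b.2
  · intro hy
    obtain ⟨a, ha⟩ := A'.mkQ_surjective (e.symm (Quotient.mk ⟨y, hy⟩))
    exact ⟨_, ⟨a, ⟨y, hy⟩, by rw [← mkQ_apply, ha, e.apply_symm_apply], rfl⟩, rfl⟩

theorem exists_goursatSubmodule_eq {W : Submodule R (M × N)} (hA : W.map (LinearMap.fst R M N) = A)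
    (hB : W.map (LinearMap.snd R M N) = B) :
    ∃ (A' : Submodule R A) (B' : Submodule R B) (e : (A ⧸ A') ≃ₗ[R] B ⧸ B'),
      goursatSubmodule e = W := by
  obtain ⟨A₁, B₁, A', B', e, hW⟩ := W.goursat
  change W = goursatSubmodule e at hW
  subst hW
  rw [map_fst_goursatSubmodule] at hA
  rw [map_snd_goursatSubmodule] at hB
  subst hA hB
  exact ⟨A', B', e, rfl⟩

theorem comap_inl_goursatSubmodule (e : (A ⧸ A') ≃ₗ[R] B ⧸ B') :
    (goursatSubmodule e).comap ((LinearMap.inl R M N).comp A.subtype) = A' := by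
  ext a
  have h := mk_mem_goursatSubmodule (e := e) (a := a) (b := 0)
  simp_all [Quotient.mk_eq_zero]

theorem comap_inr_goursatSubmodule (e : (A ⧸ A') ≃ₗ[R] B ⧸ B') :
    (goursatSubmodule e).comap ((LinearMap.inr R M N).comp B.subtype) = B' := by
  ext b
  have h := mk_mem_goursatSubmodule (e := e) (a := 0) (b := b)
  simp_all [eq_comm (a := (0 : B ⧸ B')), Quotient.mk_eq_zero]

theorem goursatSubmodule_injective :
    Function.Injective (goursatSubmodule : ((A ⧸ A') ≃ₗ[R] B ⧸ B') → Submodule R (M × N)) := by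
  intro e₁ e₂ h
  ext x
  obtain ⟨a, rfl⟩ := A'.mkQ_surjective x
  obtain ⟨b, hb⟩ := B'.mkQ_surjective (e₁ (Quotient.mk a))
  have hab : ((a : M), (b : N)) ∈ goursatSubmodule e₁ := mk_mem_goursatSubmodule.mpr hb.symm
  rw [h, mk_mem_goursatSubmodule] at hab
  simp [← hb, hab]

theorem finrank_goursatSubmodule {K M N : Type*} [DivisionRing K] [AddCommGroup M] [Module K M]
    [AddCommGroup N] [Module K N] {A : Submodule K M} {B : Submodule K N} [FiniteDimensional K A]
    [FiniteDimensional K B] {A' : Submodule K A} {B' : Submodule K B} (e : (A ⧸ A') ≃ₗ[K] B ⧸ B') :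
    finrank K (goursatSubmodule e) + finrank K (B ⧸ B') = finrank K A + finrank K B := by
  let ψ := ((-e.toLinearMap).coprod LinearMap.id) ∘ₗ A'.mkQ.prodMap B'.mkQ
  have hψ : Function.Surjective ψ := fun y => by
    obtain ⟨b, rfl⟩ := B'.mkQ_surjective y
    exact ⟨(0, b), by simp [ψ]⟩
  have hker : goursatSubmodule e = (LinearMap.ker ψ).map (A.subtype.prodMap B.subtype) := by
    rw [goursatSubmodule, LinearMap.graph_eq_ker_coprod, LinearMap.ker_comp]
  have hinj : Function.Injective (A.subtype.prodMap B.subtype) :=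
    Prod.map_injective.mpr ⟨A.injective_subtype, B.injective_subtype⟩
  rw [hker, ← (equivMapOfInjective _ hinj _).finrank_eq, ← finrank_top K (B ⧸ B'),
    ← LinearMap.range_eq_top.mpr hψ, add_comm, LinearMap.finrank_range_add_finrank_ker,
    finrank_prod]

theorem natCard_map_fst_map_snd_eq_natCard_sigma {K M N : Type*} [DivisionRing K]
    [AddCommGroup M] [Module K M] [AddCommGroup N] [Module K N] (U : Submodule K M)
    (V : Submodule K N) [FiniteDimensional K U] [FiniteDimensional K V] {s : ℕ}
    (hs : s ≤ finrank K U + finrank K V) :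
    Nat.card {W : Submodule K (M × N) // W.map (LinearMap.fst K M N) = U ∧
        W.map (LinearMap.snd K M N) = V ∧ finrank K W = finrank K U + finrank K V - s} =
      Nat.card (Σ (A' : {A' : Submodule K U // finrank K (U ⧸ A') = s})
        (B' : {B' : Submodule K V // finrank K (V ⧸ B') = s}), (U ⧸ A'.1) ≃ₗ[K] V ⧸ B'.1) := by
  symm
  refine Nat.card_congr <| .ofBijective (fun x => ⟨goursatSubmodule x.2.2,
    map_fst_goursatSubmodule _, map_snd_goursatSubmodule _, ?_⟩) ⟨?_, ?_⟩
  · have := finrank_goursatSubmodule x.2.2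
    have := x.2.1.2
    omega
  · rintro ⟨⟨A₁, hA₁⟩, ⟨B₁, hB₁⟩, e₁⟩ ⟨⟨A₂, hA₂⟩, ⟨B₂, hB₂⟩, e₂⟩ h
    have h' : goursatSubmodule e₁ = goursatSubmodule e₂ := congrArg Subtype.val h
    obtain rfl : A₁ = A₂ := by
      have hA := comap_inl_goursatSubmodule e₁
      rw [h', comap_inl_goursatSubmodule] at hA
      exact hA.symm
    obtain rfl : B₁ = B₂ := by
      have hB := comap_inr_goursatSubmodule e₁
      rw [h', comap_inr_goursatSubmodule] at hB
      exact hB.symm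
    obtain rfl := goursatSubmodule_injective h'
    rfl
  · rintro ⟨W, hWU, hWV, hW⟩
    obtain ⟨A', B', e, rfl⟩ := exists_goursatSubmodule_eq hWU hWV
    have := finrank_goursatSubmodule e
    have := e.finrank_eq
    exact ⟨⟨⟨A', by omega⟩, ⟨B', by omega⟩, e⟩, rfl⟩

end Submodule

section FiniteField

variable {F : Type*} [Field F] [Fintype F]

local notation "q" => Fintype.card F

theorem natCard_linearEquiv_eq_prod {A B : Type*} [AddCommGroup A] [Module F A] [Module.Finite F A]
    [AddCommGroup B] [Module F B] [Module.Finite F B] {s : ℕ} (hA : finrank F A = s)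
    (hB : finrank F B = s) :
    Nat.card (A ≃ₗ[F] B) = ∏ j ∈ range s, (q ^ s - q ^ j) := by
  let f : A ≃ₗ[F] (Fin s → F) := LinearEquiv.ofFinrankEq _ _ (by simp [hA])
  let g : B ≃ₗ[F] (Fin s → F) := LinearEquiv.ofFinrankEq _ _ (by simp [hB])
  let conj : (A ≃ₗ[F] B) ≃ ((Fin s → F) ≃ₗ[F] (Fin s → F)) :=
    { toFun h := f.symm ≪≫ₗ h ≪≫ₗ g
      invFun h := f ≪≫ₗ h ≪≫ₗ g.symm
      left_inv h := by ext; simp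
      right_inv h := by ext; simp }
  rw [Nat.card_congr (conj.trans (LinearMap.GeneralLinearGroup.generalLinearEquiv F _).symm.toEquiv
    |>.trans Matrix.GeneralLinearGroup.toLin.symm.toEquiv), Matrix.card_GL_field,
    Fin.prod_univ_eq_prod_range (fun j => q ^ s - q ^ j)]

theorem natCard_finrank_eq_mul_prod {M : Type*} [AddCommGroup M] [Module F M] [Module.Finite F M]
    {k : ℕ} (hk : k ≤ finrank F M) :
    Nat.card {W : Submodule F M // finrank F W = k} * ∏ j ∈ range k, (q ^ k - q ^ j) =
      ∏ j ∈ range k, (q ^ finrank F M - q ^ j) := by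
  have := Module.finite_of_finite F (M := M)
  have := Fintype.ofFinite {W : Submodule F M // finrank F W = k}
  let spanOf (t : {t : Fin k → M // LinearIndependent F t}) :
      {W : Submodule F M // finrank F W = k} :=
    ⟨span F (Set.range t.1), by rw [finrank_span_eq_card t.2, Fintype.card_fin]⟩
  have fiber (W : {W : Submodule F M // finrank F W = k}) :
      {t // spanOf t = W} ≃ {u : Fin k → W.1 // LinearIndependent F u} :=
    { toFun t := ⟨fun i => ⟨t.1.1 i, congrArg Subtype.val t.2 ▸ subset_span ⟨i, rfl⟩⟩,
        .of_comp W.1.subtype t.1.2⟩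
      invFun u := ⟨⟨W.1.subtype ∘ u.1, u.2.map' _ (ker_subtype _)⟩, Subtype.ext <|
        eq_of_le_of_finrank_eq (span_le.mpr (Set.range_subset_iff.mpr fun i => (u.1 i).2))
          (by rw [finrank_span_eq_card (u.2.map' _ (ker_subtype _)), Fintype.card_fin, W.2])⟩ }
  have card_fiber (W : {W : Submodule F M // finrank F W = k}) :
      Nat.card {t // spanOf t = W} = ∏ j ∈ range k, (q ^ k - q ^ j) := by
    rw [Nat.card_congr (fiber W), card_linearIndependent W.2.ge, W.2,
      Fin.prod_univ_eq_prod_range (fun j => q ^ k - q ^ j)]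
  rw [← Fin.prod_univ_eq_prod_range (fun j => q ^ finrank F M - q ^ j), ← card_linearIndependent hk,
    ← Nat.card_congr (Equiv.sigmaFiberEquiv spanOf), Nat.card_sigma]
  simp [card_fiber, Nat.card_eq_fintype_card]

theorem natCard_finrank_quotient_eq {K V : Type*} [Field K] [AddCommGroup V] [Module K V]
    [FiniteDimensional K V] (k : ℕ) :
    Nat.card {W : Submodule K V // finrank K (V ⧸ W) = k} =
      Nat.card {W : Submodule K (Dual K V) // finrank K W = k} :=
  Nat.card_congr <| Subspace.orderIsoFiniteDimensional.toEquiv.subtypeEquiv fun W => by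
    change _ ↔ finrank K W.dualAnnihilator = k
    rw [← W.dualQuotEquivDualAnnihilator.finrank_eq, Subspace.dual_finrank_eq]

theorem natCard_finrank_eq_gaussBinom {M : Type*} [AddCommGroup M] [Module F M] [Module.Finite F M]
    {k : ℕ} (hk : k ≤ finrank F M) :
    (Nat.card {W : Submodule F M // finrank F W = k} : ℤ) =
      (gaussBinom (finrank F M) k).eval (q : ℤ) := by
  have hq : (2 : ℤ) ≤ q := by exact_mod_cast Fintype.one_lt_card
  refine mul_right_cancel₀ (prod_range_pow_sub_pow_ne_zero hq k) ?_
  rw [gaussBinom_eval_mul_prod, ← natCast_prod_pow_sub_pow Fintype.card_pos le_rfl,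
    ← natCast_prod_pow_sub_pow Fintype.card_pos hk, ← Nat.cast_mul, natCard_finrank_eq_mul_prod hk]

theorem natCard_finrank_quotient_eq_gaussBinom {M : Type*} [AddCommGroup M] [Module F M]
    [Module.Finite F M] {k : ℕ} (hk : k ≤ finrank F M) :
    (Nat.card {W : Submodule F M // finrank F (M ⧸ W) = k} : ℤ) =
      (gaussBinom (finrank F M) k).eval (q : ℤ) := by
  rw [natCard_finrank_quotient_eq,
    natCard_finrank_eq_gaussBinom (by rwa [Subspace.dual_finrank_eq]), Subspace.dual_finrank_eq]

theorem natCard_map_fst_map_snd_eq {M N : Type*} [AddCommGroup M] [Module F M] [AddCommGroup N]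
    [Module F N] (U : Submodule F M) (V : Submodule F N) [FiniteDimensional F U]
    [FiniteDimensional F V] {s : ℕ} (hs : s ≤ finrank F U + finrank F V) :
    Nat.card {W : Submodule F (M × N) // W.map (LinearMap.fst F M N) = U ∧
        W.map (LinearMap.snd F M N) = V ∧ finrank F W = finrank F U + finrank F V - s} =
      Nat.card {A' : Submodule F U // finrank F (U ⧸ A') = s} *
        Nat.card {B' : Submodule F V // finrank F (V ⧸ B') = s} *
          ∏ j ∈ range s, (q ^ s - q ^ j) := by
  have := Module.finite_of_finite F (M := U)
  have := Module.finite_of_finite F (M := V)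
  have (A' : Submodule F U) (B' : Submodule F V) : Finite ((U ⧸ A') ≃ₗ[F] V ⧸ B') := by
    have := Module.finite_of_finite F (M := U ⧸ A')
    have := Module.finite_of_finite F (M := V ⧸ B')
    exact .of_injective _ DFunLike.coe_injective
  have := Fintype.ofFinite {A' : Submodule F U // finrank F (U ⧸ A') = s}
  have := Fintype.ofFinite {B' : Submodule F V // finrank F (V ⧸ B') = s}
  have card_iso (A' : {A' : Submodule F U // finrank F (U ⧸ A') = s})
      (B' : {B' : Submodule F V // finrank F (V ⧸ B') = s}) :
      Nat.card ((U ⧸ A'.1) ≃ₗ[F] V ⧸ B'.1) = ∏ j ∈ range s, (q ^ s - q ^ j) :=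
    natCard_linearEquiv_eq_prod A'.2 B'.2
  rw [natCard_map_fst_map_snd_eq_natCard_sigma U V hs]
  simp [Nat.card_sigma, card_iso, Nat.card_eq_fintype_card, mul_assoc]

end FiniteField

theorem natCard_map_funLeft_sumInl_sumInr_eq {R ι κ : Type*} [Ring R] (U : Submodule R (ι → R))
    (V : Submodule R (κ → R)) (k : ℕ) :
    Nat.card {W : Submodule R (ι ⊕ κ → R) // W.map (LinearMap.funLeft R R Sum.inl) = U ∧
        W.map (LinearMap.funLeft R R Sum.inr) = V ∧ finrank R W = k} =
      Nat.card {W : Submodule R ((ι → R) × (κ → R)) // W.map (LinearMap.fst R _ _) = U ∧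
        W.map (LinearMap.snd R _ _) = V ∧ finrank R W = k} := by
  let e := LinearEquiv.sumArrowLequivProdArrow ι κ R R
  refine Nat.card_congr <| (orderIsoMapComap e).toEquiv.subtypeEquiv fun W => ?_
  change _ ↔ (W.map e.toLinearMap).map _ = U ∧ (W.map e.toLinearMap).map _ = V ∧
    finrank R (W.map e.toLinearMap) = k
  rw [← Submodule.map_comp, ← Submodule.map_comp, LinearEquiv.finrank_map_eq]
  rfl

/-- The number of subspaces `W ≤ F_q^{n₁+n₂}` of dimension `d+e-s` projecting onto given
subspaces `U` (of dimension `d`) and `V` (of dimension `e`) is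
`[d choose s]_q [e choose s]_q (q^s-1)(q^s-q)⋯(q^s-q^{s-1})`. -/
theorem count_subspaces_with_projections {F : Type} [Field F] [Fintype F] {n₁ n₂ : ℕ}
    (U : Submodule F (Fin n₁ → F)) (V : Submodule F (Fin n₂ → F)) (d e s : ℕ)
    (hd : Module.finrank F U = d) (he : Module.finrank F V = e)
    (hde : e ≤ d) (hs : s ≤ e) :
    (Nat.card {W : Submodule F ((Fin n₁ ⊕ Fin n₂) → F) //
        W.map (LinearMap.funLeft F F Sum.inl) = U ∧
        W.map (LinearMap.funLeft F F Sum.inr) = V ∧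
        Module.finrank F W = d + e - s} : ℤ) =
      (gaussBinom d s).eval (Fintype.card F : ℤ) * (gaussBinom e s).eval (Fintype.card F : ℤ) *
        ∏ j ∈ Finset.range s, ((Fintype.card F : ℤ) ^ s - (Fintype.card F : ℤ) ^ j) := by
  subst hd he
  rw [natCard_map_funLeft_sumInl_sumInr_eq, natCard_map_fst_map_snd_eq U V (by omega),
    Nat.cast_mul, Nat.cast_mul, natCard_finrank_quotient_eq_gaussBinom (hs.trans hde),
    natCard_finrank_quotient_eq_gaussBinom hs, natCast_prod_pow_sub_pow Fintype.card_pos le_rfl]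
end
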